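/- arXiv:1809.08303 — 9 statements merged into one kernel-verified Lean document; each statement's English description precedes it below -/
import Mathlib

section
/- Let (X,𝒜) be a measurable space, μ a monotone measure, ∘ : [0,∞]×[0,∞] → [0,∞] a nondecreasing binary map with a∘0 = 0 for all a and x ↦ x∘y left-continuous for each fixed y. Let f : X → [0,∞] be measurable, H : [0,∞] → [0,∞] with H∘f measurable, and p = Su_{μ,A}(f) := sup_{t≥0} min(t, μ(A ∩ {f ≥ t})) < ∞. Then the generalized Sugeno integral I_{∘,μ,A}(H(f)) := sup_{t≥0} t ∘ μ(A ∩ {H(f) ≥ t}) satisfies I_{∘,μ,A}(H(f)) ≥ max( (min(H(p⁻), inf H([p,∞])) ∘ p), (inf H) ∘ μ(A) ), where H(p⁻) denotes the lower left-hand limit of H at p (with H(0⁻) = 0). -/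
/-!
Write `c = min (H(p⁻), inf H([p,∞]))`. For `r < c` there is `q < p` with `r ≤ H y` for all
`y > q`, so the level set `{H ∘ f ≥ r}` contains `{f > q}`. Since `p` is the Sugeno integral of
`f`, every measurable set containing `A ∩ {f > q}` with `q < p` has measure at least `p`, whence `r ∘ p ≤ I(H ∘ f)`;
left-continuity of `∘` in its first argument lets `r` increase to `c`. The second term is the
level `t = inf H`, at which the level set of `H ∘ f` is all of `A`.
-/

open scoped ENNReal
open Set

variable {X : Type*}

/-- Generalized Sugeno integral with respect to a binary operation `op`. -/
noncomputable def gSugeno (op : ℝ≥0∞ → ℝ≥0∞ → ℝ≥0∞) (μ : Set X → ℝ≥0∞) (A : Set X)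
    (f : X → ℝ≥0∞) : ℝ≥0∞ :=
  ⨆ t : ℝ≥0∞, op t (μ (A ∩ {x | t ≤ f x}))

/-- The Sugeno integral. -/
noncomputable def sugeno (μ : Set X → ℝ≥0∞) (A : Set X) (f : X → ℝ≥0∞) : ℝ≥0∞ :=
  ⨆ t : ℝ≥0∞, min t (μ (A ∩ {x | t ≤ f x}))

/-- Lower left-hand limit of `H` at `p`: `lim_{ε→0} inf H((p-ε,p))`, with value `0` at `p = 0`. -/
noncomputable def lowerLeftLim (H : ℝ≥0∞ → ℝ≥0∞) (p : ℝ≥0∞) : ℝ≥0∞ :=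
  ⨆ q ∈ Iio p, ⨅ y ∈ Ioo q p, H y

open Filter Topology

theorem ContinuousWithinAt.le_of_forall_lt_le {α β : Type*} [TopologicalSpace α] [LinearOrder α]
    [OrderTopology α] [DenselyOrdered α] [TopologicalSpace β] [Preorder β] [ClosedIicTopology β]
    {g : α → β} {c : α} {b : β} (hg : ContinuousWithinAt g (Iio c) c) (hc : (Iio c).Nonempty)
    (h : ∀ r < c, g r ≤ b) : g c ≤ b :=
  haveI : (𝓝[<] c).NeBot := nhdsLT_neBot_of_exists_lt hc
  le_of_tendsto hg (eventually_nhdsWithin_of_forall h)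

theorem op_le_gSugeno {op : ℝ≥0∞ → ℝ≥0∞ → ℝ≥0∞} {μ : Set X → ℝ≥0∞} {A : Set X}
    {g : X → ℝ≥0∞} {t m : ℝ≥0∞} (hop : Monotone (op t)) (hm : m ≤ μ (A ∩ {x | t ≤ g x})) :
    op t m ≤ gSugeno op μ A g :=
  le_iSup_of_le (f := fun s => op s (μ (A ∩ {x | s ≤ g x}))) t (hop hm)

section Sugeno

variable [MeasurableSpace X] {μ : Set X → ℝ≥0∞} {A : Set X} {f : X → ℝ≥0∞}

theorem sugeno_le_measure (hA : MeasurableSet A) (hf : Measurable f)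
    (hμ : ∀ B C : Set X, MeasurableSet B → MeasurableSet C → B ⊆ C → μ B ≤ μ C) :
    sugeno μ A f ≤ μ A :=
  iSup_le fun _ => (min_le_right _ _).trans <|
    hμ _ _ (hA.inter (measurableSet_le measurable_const hf)) hA inter_subset_left

theorem lt_measure_of_lt_sugeno (hA : MeasurableSet A) (hf : Measurable f)
    (hμ : ∀ B C : Set X, MeasurableSet B → MeasurableSet C → B ⊆ C → μ B ≤ μ C)
    {q : ℝ≥0∞} (hq : q < sugeno μ A f) : q < μ (A ∩ {x | q < f x}) := by
  obtain ⟨t, ht⟩ := lt_iSup_iff.mp hq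
  obtain ⟨hqt, hqμ⟩ := lt_min_iff.mp ht
  refine hqμ.trans_le (hμ _ _ ?_ ?_ ?_)
  · exact hA.inter (measurableSet_le measurable_const hf)
  · exact hA.inter (measurableSet_lt measurable_const hf)
  · exact inter_subset_inter_right _ fun _ hx => hqt.trans_le hx

/-- If `B` contains the superlevel set `A ∩ {f > q}` for one `q` below the Sugeno integral, it
contains `A ∩ {f > q'}` for all `q' ∈ [q, μ B]` too, which forces `μ B` up to the integral. -/
theorem sugeno_le_measure_of_subset (hA : MeasurableSet A) (hf : Measurable f)
    (hμ : ∀ B C : Set X, MeasurableSet B → MeasurableSet C → B ⊆ C → μ B ≤ μ C)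
    {q : ℝ≥0∞} (hq : q < sugeno μ A f) {B : Set X} (hB : MeasurableSet B)
    (hsub : A ∩ {x | q < f x} ⊆ B) : sugeno μ A f ≤ μ B := by
  by_contra! hBlt
  have hlt := lt_measure_of_lt_sugeno hA hf hμ (max_lt hq hBlt)
  have hle : μ (A ∩ {x | max q (μ B) < f x}) ≤ μ B :=
    hμ _ _ (hA.inter (measurableSet_lt measurable_const hf)) hB
      fun x hx => hsub ⟨hx.1, (le_max_left q (μ B)).trans_lt hx.2⟩
  exact (hlt.trans_le hle).not_ge (le_max_right _ _)

end Sugeno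

theorem exists_lt_forall_lt_of_lt_min_lowerLeftLim {H : ℝ≥0∞ → ℝ≥0∞} {p r : ℝ≥0∞}
    (hr : r < min (lowerLeftLim H p) (⨅ y ∈ Ici p, H y)) : ∃ q < p, ∀ y, q < y → r < H y := by
  obtain ⟨hleft, hright⟩ := lt_min_iff.mp hr
  obtain ⟨q, hq⟩ := lt_iSup_iff.mp hleft
  obtain ⟨hqp, hq⟩ := lt_iSup_iff.mp hq
  refine ⟨q, hqp, fun y hy => ?_⟩
  rcases lt_or_ge y p with hyp | hyp
  · exact hq.trans_le (iInf₂_le y ⟨hy, hyp⟩)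
  · exact hright.trans_le (iInf₂_le y hyp)

theorem stmt0_general [MeasurableSpace X] (μ : Set X → ℝ≥0∞) (A : Set X) (hA : MeasurableSet A)
    (hμmono : ∀ B C : Set X, MeasurableSet B → MeasurableSet C → B ⊆ C → μ B ≤ μ C)
    (op : ℝ≥0∞ → ℝ≥0∞ → ℝ≥0∞)
    (hop : ∀ a b c d : ℝ≥0∞, a ≤ c → b ≤ d → op a b ≤ op c d)
    (hlc : ∀ y x : ℝ≥0∞, ContinuousWithinAt (fun a => op a y) (Iio x) x)
    (f : X → ℝ≥0∞) (hf : Measurable f)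
    (H : ℝ≥0∞ → ℝ≥0∞) (hHf : Measurable (H ∘ f))
    (p : ℝ≥0∞) (hp : p = sugeno μ A f) :
    max (op (min (lowerLeftLim H p) (⨅ y ∈ Ici p, H y)) p) (op (⨅ y : ℝ≥0∞, H y) (μ A))
      ≤ gSugeno op μ A (H ∘ f) := by
  have hmono : ∀ t, Monotone (op t) := fun t _ _ => hop t _ t _ le_rfl
  have hlevel : ∀ t, MeasurableSet (A ∩ {x | t ≤ (H ∘ f) x}) := fun t =>
    hA.inter (measurableSet_le measurable_const hHf)
  have hA_le : ∀ t ≤ ⨅ y, H y, μ A ≤ μ (A ∩ {x | t ≤ (H ∘ f) x}) := fun t ht =>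
    hμmono _ _ hA (hlevel t) fun x hx => ⟨hx, ht.trans (iInf_le H (f x))⟩
  refine max_le ?_ (op_le_gSugeno (hmono _) (hA_le _ le_rfl))
  set c := min (lowerLeftLim H p) (⨅ y ∈ Ici p, H y)
  rcases eq_or_ne c 0 with hc | hc
  · rw [hc]
    exact op_le_gSugeno (hmono 0) ((hp ▸ sugeno_le_measure hA hf hμmono).trans (hA_le 0 bot_le))
  refine (hlc p c).le_of_forall_lt_le ⟨0, pos_iff_ne_zero.mpr hc⟩
    fun r hr => op_le_gSugeno (hmono r) ?_
  obtain ⟨q, hqp, hq⟩ := exists_lt_forall_lt_of_lt_min_lowerLeftLim hr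
  exact hp ▸ sugeno_le_measure_of_subset hA hf hμmono (hp ▸ hqp) (hlevel r)
    fun x hx => ⟨hx.1, (hq _ hx.2).le⟩

theorem stmt0 [MeasurableSpace X] (μ : Set X → ℝ≥0∞) (A : Set X) (hA : MeasurableSet A)
    (hμ0 : μ ∅ = 0)
    (hμmono : ∀ B C : Set X, MeasurableSet B → MeasurableSet C → B ⊆ C → μ B ≤ μ C)
    (op : ℝ≥0∞ → ℝ≥0∞ → ℝ≥0∞)
    (hop : ∀ a b c d : ℝ≥0∞, a ≤ c → b ≤ d → op a b ≤ op c d)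
    (hop0 : ∀ a : ℝ≥0∞, op a 0 = 0)
    (hlc : ∀ y x : ℝ≥0∞, ContinuousWithinAt (fun a => op a y) (Iio x) x)
    (f : X → ℝ≥0∞) (hf : Measurable f)
    (H : ℝ≥0∞ → ℝ≥0∞) (hHf : Measurable (H ∘ f))
    (p : ℝ≥0∞) (hp : p = sugeno μ A f) (hpfin : p ≠ ⊤) :
    max (op (min (lowerLeftLim H p) (⨅ y ∈ Ici p, H y)) p) (op (⨅ y : ℝ≥0∞, H y) (μ A))
      ≤ gSugeno op μ A (H ∘ f) :=
  stmt0_general μ A hA hμmono op hop hlc f hf H hHf p hp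
end

section
/- Let μ be a monotone measure that is weakly subadditive on A (i.e., μ(A) ≤ μ(A∩B) + μ(A∩Bᶜ) for all B ∈ 𝒜), ∘ a nondecreasing binary map with a∘0 = 0 and x ↦ x∘y left-continuous for every fixed y. Let f : X → [0,∞] be measurable, H : [0,∞] → [0,∞] with H∘f measurable, and p = Su_{μ,A}(f) < ∞. Then I_{∘,μ,A}(H(f)) ≥ max( (min(H(p⁺), inf H([0,p])) ∘ (μ(A) − p)), (inf H) ∘ μ(A) ), where H(p⁺) = lim_{ε→0} inf H((p, p+ε)) and subtraction is truncated at 0 when μ(A) ≤ p. -/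
/-!
For `t` below `min (H(p⁺)) (inf H([0,p]))` there is `q > p` with `t ≤ H y` for all `y < q`, so
`{f < q} ⊆ {H ∘ f ≥ t}`. Since `q` exceeds the Sugeno integral `p`, the level set `{f ≥ q}` has
measure at most `p` within `A`, and weak subadditivity gives `μ(A ∩ {f < q}) ≥ μ(A) - p`. Hence
`t ∘ (μ(A) - p)` is bounded by the generalized integral of `H ∘ f`, and left-continuity of `∘`
in its first argument lets `t` reach the minimum. The second term is the level `t = inf H`,
at which the level set is all of `A`.
-/

open scoped ENNReal
open Set

variable {X : Type*}

/-- Lower right-hand limit of `H` at `p`: `lim_{ε→0} inf H((p,p+ε))`. -/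
noncomputable def lowerRightLim (H : ℝ≥0∞ → ℝ≥0∞) (p : ℝ≥0∞) : ℝ≥0∞ :=
  ⨆ q ∈ Ioi p, ⨅ y ∈ Ioo p q, H y

theorem le_of_forall_lt_of_continuousWithinAt_Iio {α β : Type*} [TopologicalSpace α]
    [LinearOrder α] [DenselyOrdered α] [OrderTopology α] [TopologicalSpace β] [Preorder β]
    [ClosedIicTopology β] {g : α → β} {c : α} {J : β}
    (hg : ContinuousWithinAt g (Iio c) c) (hc : ∃ t, t < c) (h : ∀ t < c, g t ≤ J) :
    g c ≤ J :=
  haveI := nhdsLT_neBot_of_exists_lt hc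
  le_of_tendsto hg (eventually_nhdsWithin_of_forall h)

theorem exists_lt_forall_le_of_lt_lowerRightLim {H : ℝ≥0∞ → ℝ≥0∞} {p t : ℝ≥0∞}
    (hlim : t < lowerRightLim H p) (hle : ∀ y ≤ p, t ≤ H y) :
    ∃ q, p < q ∧ ∀ y < q, t ≤ H y := by
  simp only [lowerRightLim, lt_iSup_iff] at hlim
  obtain ⟨q, hpq, hq⟩ := hlim
  refine ⟨q, hpq, fun y hyq => ?_⟩
  rcases le_or_gt y p with hyp | hpy
  · exact hle y hyp
  · exact (hq.trans_le (iInf₂_le y ⟨hpy, hyq⟩)).le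

section SugenoIntegrals

variable {μ : Set X → ℝ≥0∞} {A : Set X} {f : X → ℝ≥0∞}

theorem le_gSugeno (op : ℝ≥0∞ → ℝ≥0∞ → ℝ≥0∞) (t : ℝ≥0∞) :
    op t (μ (A ∩ {x | t ≤ f x})) ≤ gSugeno op μ A f :=
  le_iSup (fun t => op t (μ (A ∩ {x | t ≤ f x}))) t

theorem op_measure_le_gSugeno_of_forall_le (op : ℝ≥0∞ → ℝ≥0∞ → ℝ≥0∞) {t : ℝ≥0∞}
    (ht : ∀ x ∈ A, t ≤ f x) : op t (μ A) ≤ gSugeno op μ A f := by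
  have h := le_gSugeno (μ := μ) (A := A) (f := f) op t
  rwa [inter_eq_self_of_subset_left (show A ⊆ {x | t ≤ f x} from ht)] at h

theorem measure_setOf_le_le_sugeno {q : ℝ≥0∞} (hq : sugeno μ A f < q) :
    μ (A ∩ {x | q ≤ f x}) ≤ sugeno μ A f := by
  have hmin : min q (μ (A ∩ {x | q ≤ f x})) ≤ sugeno μ A f :=
    le_iSup (fun t => min t (μ (A ∩ {x | t ≤ f x}))) q
  rcases min_cases q (μ (A ∩ {x | q ≤ f x})) with ⟨hmin_eq, -⟩ | ⟨hmin_eq, -⟩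
  · exact absurd (hmin_eq ▸ hmin) hq.not_ge
  · rwa [hmin_eq] at hmin

theorem measure_sub_sugeno_le_measure_setOf_lt [MeasurableSpace X]
    (hμwsub : ∀ B : Set X, MeasurableSet B → μ A ≤ μ (A ∩ B) + μ (A ∩ Bᶜ))
    (hf : Measurable f) {q : ℝ≥0∞} (hq : sugeno μ A f < q) :
    μ A - sugeno μ A f ≤ μ (A ∩ {x | f x < q}) := by
  have hcompl : {x | q ≤ f x}ᶜ = {x | f x < q} := by
    simp only [compl_ofPred, not_le]
  rw [tsub_le_iff_left]
  calc μ A ≤ μ (A ∩ {x | q ≤ f x}) + μ (A ∩ {x | f x < q}) :=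
        hcompl ▸ hμwsub _ (hf measurableSet_Ici)
    _ ≤ sugeno μ A f + μ (A ∩ {x | f x < q}) := by gcongr; exact measure_setOf_le_le_sugeno hq

end SugenoIntegrals

theorem stmt1_general [MeasurableSpace X] (μ : Set X → ℝ≥0∞) (A : Set X) (hA : MeasurableSet A)
    (hμmono : ∀ B C : Set X, MeasurableSet B → MeasurableSet C → B ⊆ C → μ B ≤ μ C)
    (hμwsub : ∀ B : Set X, MeasurableSet B → μ A ≤ μ (A ∩ B) + μ (A ∩ Bᶜ))
    (op : ℝ≥0∞ → ℝ≥0∞ → ℝ≥0∞)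
    (hop : ∀ a b c d : ℝ≥0∞, a ≤ c → b ≤ d → op a b ≤ op c d)
    (hlc : ∀ y x : ℝ≥0∞, ContinuousWithinAt (fun a => op a y) (Iio x) x)
    (f : X → ℝ≥0∞) (hf : Measurable f)
    (H : ℝ≥0∞ → ℝ≥0∞) (hHf : Measurable (H ∘ f))
    (p : ℝ≥0∞) (hp : p = sugeno μ A f) :
    max (op (min (lowerRightLim H p) (⨅ y ∈ Icc 0 p, H y)) (μ A - p))
        (op (⨅ y : ℝ≥0∞, H y) (μ A))
      ≤ gSugeno op μ A (H ∘ f) := by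
  have hinf : op (⨅ y, H y) (μ A) ≤ gSugeno op μ A (H ∘ f) :=
    op_measure_le_gSugeno_of_forall_le op fun x _ => iInf_le H (f x)
  refine max_le ?_ hinf
  set c := min (lowerRightLim H p) (⨅ y ∈ Icc 0 p, H y)
  have hbelow : ∀ t < c, op t (μ A - p) ≤ gSugeno op μ A (H ∘ f) := by
    intro t ht
    obtain ⟨q, hpq, hq⟩ := exists_lt_forall_le_of_lt_lowerRightLim
      (ht.trans_le (min_le_left _ _))
      fun y hy => (ht.trans_le ((min_le_right _ _).trans (iInf₂_le y ⟨zero_le, hy⟩))).le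
    have hsub : A ∩ {x | f x < q} ⊆ A ∩ {x | t ≤ (H ∘ f) x} :=
      inter_subset_inter_right A fun x hx => hq (f x) hx
    calc op t (μ A - p) ≤ op t (μ (A ∩ {x | f x < q})) :=
          hop _ _ _ _ le_rfl (hp ▸ measure_sub_sugeno_le_measure_setOf_lt hμwsub hf (hp ▸ hpq))
      _ ≤ op t (μ (A ∩ {x | t ≤ (H ∘ f) x})) :=
          hop _ _ _ _ le_rfl (hμmono _ _ (hA.inter (hf measurableSet_Iio))
            (hA.inter (hHf measurableSet_Ici)) hsub)
      _ ≤ gSugeno op μ A (H ∘ f) := le_gSugeno op t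
  -- Left-continuity says nothing at `c = 0`; there the second term of the maximum dominates.
  rcases eq_zero_or_pos c with hc | hc
  · rw [hc]
    exact (hop _ _ _ _ zero_le tsub_le_self).trans hinf
  · exact le_of_forall_lt_of_continuousWithinAt_Iio (g := fun a => op a (μ A - p))
      (hlc _ c) ⟨0, hc⟩ hbelow

theorem stmt1 [MeasurableSpace X] (μ : Set X → ℝ≥0∞) (A : Set X) (hA : MeasurableSet A)
    (hμ0 : μ ∅ = 0)
    (hμmono : ∀ B C : Set X, MeasurableSet B → MeasurableSet C → B ⊆ C → μ B ≤ μ C)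
    (hμwsub : ∀ B : Set X, MeasurableSet B → μ A ≤ μ (A ∩ B) + μ (A ∩ Bᶜ))
    (op : ℝ≥0∞ → ℝ≥0∞ → ℝ≥0∞)
    (hop : ∀ a b c d : ℝ≥0∞, a ≤ c → b ≤ d → op a b ≤ op c d)
    (hop0 : ∀ a : ℝ≥0∞, op a 0 = 0)
    (hlc : ∀ y x : ℝ≥0∞, ContinuousWithinAt (fun a => op a y) (Iio x) x)
    (f : X → ℝ≥0∞) (hf : Measurable f)
    (H : ℝ≥0∞ → ℝ≥0∞) (hHf : Measurable (H ∘ f))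
    (p : ℝ≥0∞) (hp : p = sugeno μ A f) (hpfin : p ≠ ⊤) :
    max (op (min (lowerRightLim H p) (⨅ y ∈ Icc 0 p, H y)) (μ A - p))
        (op (⨅ y : ℝ≥0∞, H y) (μ A))
      ≤ gSugeno op μ A (H ∘ f) :=
  stmt1_general μ A hA hμmono hμwsub op hop hlc f hf H hHf p hp
end

section
/- Let μ be a monotone measure, f : X → [0,∞] measurable, and H : [0,∞] → [0,∞] nondecreasing and left-continuous at p = Su_{μ,A}(f) < ∞. Then the Sugeno integral satisfies Su_{μ,A}(H∘f) ≥ min(H(p), p). -/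
open scoped ENNReal
open Set

variable {X : Type*}

/-!
Every level `t < p` is beaten by some `s > t` with `μ (A ∩ {s ≤ f}) > t`. Since `H` is monotone,
`A ∩ {s ≤ f} ⊆ A ∩ {H s ≤ H ∘ f}`, so the level `H s` witnesses `min (H t) t ≤ Su(H ∘ f)`.
Letting `t ↑ p` and using left continuity of `H` at `p` gives the bound at `p` itself.
-/

theorem ContinuousWithinAt.apply_le_of_forall_lt {α β : Type*} [TopologicalSpace α]
    [LinearOrder α] [OrderTopology α] [DenselyOrdered α] [TopologicalSpace β] [Preorder β]
    [OrderClosedTopology β] {φ : α → β} {p : α} {c : β} (hp : (Iio p).Nonempty)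
    (hφ : ContinuousWithinAt φ (Iio p) p) (h : ∀ t < p, φ t ≤ c) : φ p ≤ c :=
  hφ.closure_le (by rw [closure_Iio' hp]; exact mem_Iic.2 le_rfl) continuousWithinAt_const h

section Sugeno

theorem min_le_sugeno (μ : Set X → ℝ≥0∞) (A : Set X) (f : X → ℝ≥0∞) (t : ℝ≥0∞) :
    min t (μ (A ∩ {x | t ≤ f x})) ≤ sugeno μ A f :=
  le_iSup (fun t => min t (μ (A ∩ {x | t ≤ f x}))) t

variable {μ : Set X → ℝ≥0∞} {A : Set X} {f : X → ℝ≥0∞}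

theorem exists_lt_measure_of_lt_sugeno {t : ℝ≥0∞} (ht : t < sugeno μ A f) :
    ∃ s, t < s ∧ t < μ (A ∩ {x | s ≤ f x}) := by
  obtain ⟨s, hs⟩ := lt_iSup_iff.mp ht
  exact ⟨s, lt_min_iff.mp hs⟩

variable [MeasurableSpace X] {H : ℝ≥0∞ → ℝ≥0∞}

theorem min_measure_le_sugeno_comp (hA : MeasurableSet A)
    (hμmono : ∀ B C : Set X, MeasurableSet B → MeasurableSet C → B ⊆ C → μ B ≤ μ C)
    (hf : Measurable f) (hH : Monotone H) (s : ℝ≥0∞) :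
    min (H s) (μ (A ∩ {x | s ≤ f x})) ≤ sugeno μ A (H ∘ f) := by
  have hsub : A ∩ {x | s ≤ f x} ⊆ A ∩ {x | H s ≤ (H ∘ f) x} :=
    inter_subset_inter_right _ fun _ hx => hH hx
  have hμle := hμmono _ _ (hA.inter (hf measurableSet_Ici))
    (hA.inter ((hH.measurable.comp hf) measurableSet_Ici)) hsub
  exact (min_le_min_left _ hμle).trans (min_le_sugeno μ A (H ∘ f) (H s))

theorem min_apply_le_sugeno_comp_of_lt_sugeno (hA : MeasurableSet A)
    (hμmono : ∀ B C : Set X, MeasurableSet B → MeasurableSet C → B ⊆ C → μ B ≤ μ C)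
    (hf : Measurable f) (hH : Monotone H) {t : ℝ≥0∞} (ht : t < sugeno μ A f) :
    min (H t) t ≤ sugeno μ A (H ∘ f) := by
  obtain ⟨s, hts, htμ⟩ := exists_lt_measure_of_lt_sugeno ht
  exact (min_le_min (hH hts.le) htμ.le).trans (min_measure_le_sugeno_comp hA hμmono hf hH s)

end Sugeno

theorem stmt2_general [MeasurableSpace X] (μ : Set X → ℝ≥0∞) (A : Set X) (hA : MeasurableSet A)
    (hμmono : ∀ B C : Set X, MeasurableSet B → MeasurableSet C → B ⊆ C → μ B ≤ μ C)
    (f : X → ℝ≥0∞) (hf : Measurable f)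
    (H : ℝ≥0∞ → ℝ≥0∞) (hH : Monotone H)
    (p : ℝ≥0∞) (hp : p = sugeno μ A f)
    (hHlc : ContinuousWithinAt H (Iio p) p) :
    min (H p) p ≤ sugeno μ A (H ∘ f) := by
  rcases eq_zero_or_pos p with rfl | hp0
  · simp
  refine ContinuousWithinAt.apply_le_of_forall_lt (φ := fun t => min (H t) t) ⟨0, hp0⟩
    (hHlc.min continuousWithinAt_id) fun t ht => ?_
  subst hp
  exact min_apply_le_sugeno_comp_of_lt_sugeno hA hμmono hf hH ht

theorem stmt2 [MeasurableSpace X] (μ : Set X → ℝ≥0∞) (A : Set X) (hA : MeasurableSet A)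
    (hμ0 : μ ∅ = 0)
    (hμmono : ∀ B C : Set X, MeasurableSet B → MeasurableSet C → B ⊆ C → μ B ≤ μ C)
    (f : X → ℝ≥0∞) (hf : Measurable f)
    (H : ℝ≥0∞ → ℝ≥0∞) (hH : Monotone H)
    (p : ℝ≥0∞) (hp : p = sugeno μ A f) (hpfin : p ≠ ⊤)
    (hHlc : ContinuousWithinAt H (Iio p) p) :
    min (H p) p ≤ sugeno μ A (H ∘ f) :=
  stmt2_general μ A hA hμmono f hf H hH p hp hHlc
end

section
/- Let ∘ : [0,∞]×[0,∞] → [0,∞] be nondecreasing with a∘0 = 0 for all a and x ↦ x∘y right-continuous for each fixed y. Let μ be a monotone measure, f : X → [0,∞] measurable, H : [0,∞] → [0,∞] with H∘f measurable, and p = Su_{μ,A}(f) < ∞. Then I_{∘,μ,A}(H(f)) ≤ max( (max(H(p⁺), sup H([0,p])) ∘ μ(A)), ((sup H) ∘ p) ), where H(p⁺) = lim_{ε→0} sup H((p, p+ε)). -/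
open scoped ENNReal
open Set

variable {X : Type*}

/-- Upper right-hand limit of `H` at `p`: `lim_{ε→0} sup H((p,p+ε))`. -/
noncomputable def upperRightLim (H : ℝ≥0∞ → ℝ≥0∞) (p : ℝ≥0∞) : ℝ≥0∞ :=
  ⨅ q ∈ Ioi p, ⨆ y ∈ Ioo p q, H y

/-!
Split `t ∘ μ(A ∩ {H ∘ f ≥ t})` according to the size of `t`. If `t` is at most
`max (H(p⁺)) (sup H([0,p]))`, bound the measure by `μ(A)`. Otherwise some `q > p` has
`sup H((p,q)) < t`, so `H (f x) ≥ t` forces `f x ≥ q`; as `q > p = Su(f)`, the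
measure of `A ∩ {f ≥ q}` is at most `p`, and `t ≤ sup H` unless the level set is empty.
-/

theorem measure_inter_le_sugeno_of_sugeno_lt (μ : Set X → ℝ≥0∞) (A : Set X) (f : X → ℝ≥0∞)
    {q : ℝ≥0∞} (hq : sugeno μ A f < q) : μ (A ∩ {x | q ≤ f x}) ≤ sugeno μ A f := by
  have hmin : min q (μ (A ∩ {x | q ≤ f x})) ≤ sugeno μ A f :=
    le_iSup (fun t => min t (μ (A ∩ {x | t ≤ f x}))) q
  exact (min_le_iff.1 hmin).resolve_left hq.not_ge

theorem exists_iSup_Ioo_lt_of_upperRightLim_lt {H : ℝ≥0∞ → ℝ≥0∞} {p t : ℝ≥0∞}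
    (ht : upperRightLim H p < t) : ∃ q, p < q ∧ ⨆ y ∈ Ioo p q, H y < t := by
  simpa only [upperRightLim, iInf_lt_iff, mem_Ioi, exists_prop] using ht

theorem le_of_le_apply_of_iSup_lt {H : ℝ≥0∞ → ℝ≥0∞} {p q t y : ℝ≥0∞}
    (hlow : ⨆ z ∈ Icc 0 p, H z < t) (hmid : ⨆ z ∈ Ioo p q, H z < t) (hy : t ≤ H y) :
    q ≤ y := by
  have hpy : p < y := by
    by_contra! hyp
    exact (hy.trans (le_biSup H (mem_Icc.2 ⟨zero_le, hyp⟩))).not_gt hlow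
  by_contra! hyq
  exact (hy.trans (le_biSup H (mem_Ioo.2 ⟨hpy, hyq⟩))).not_gt hmid

theorem stmt8_general [MeasurableSpace X] (μ : Set X → ℝ≥0∞) (A : Set X) (hA : MeasurableSet A)
    (hμ0 : μ ∅ = 0)
    (hμmono : ∀ B C : Set X, MeasurableSet B → MeasurableSet C → B ⊆ C → μ B ≤ μ C)
    (op : ℝ≥0∞ → ℝ≥0∞ → ℝ≥0∞)
    (hop : ∀ a b c d : ℝ≥0∞, a ≤ c → b ≤ d → op a b ≤ op c d)
    (hop0 : ∀ a : ℝ≥0∞, op a 0 = 0)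
    (f : X → ℝ≥0∞) (hf : Measurable f)
    (H : ℝ≥0∞ → ℝ≥0∞) (hHf : Measurable (H ∘ f))
    (p : ℝ≥0∞) (hp : p = sugeno μ A f) :
    gSugeno op μ A (H ∘ f)
      ≤ max (op (max (upperRightLim H p) (⨆ y ∈ Icc 0 p, H y)) (μ A))
            (op (⨆ y : ℝ≥0∞, H y) p) := by
  refine iSup_le fun t => ?_
  have hlevel : MeasurableSet (A ∩ {x | t ≤ (H ∘ f) x}) := hA.inter (hHf measurableSet_Ici)
  by_cases htM : t ≤ max (upperRightLim H p) (⨆ y ∈ Icc 0 p, H y)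
  · exact le_max_of_le_left (hop _ _ _ _ htM (hμmono _ _ hlevel hA inter_subset_left))
  obtain ⟨hlim, hlow⟩ := max_lt_iff.1 (not_le.1 htM)
  obtain ⟨q, hpq, hmid⟩ := exists_iSup_Ioo_lt_of_upperRightLim_lt hlim
  by_cases htH : t ≤ ⨆ y, H y
  · have hsub : A ∩ {x | t ≤ (H ∘ f) x} ⊆ A ∩ {x | q ≤ f x} :=
      inter_subset_inter_right _ fun x hx => le_of_le_apply_of_iSup_lt hlow hmid hx
    have hμq : μ (A ∩ {x | q ≤ f x}) ≤ p :=
      hp ▸ measure_inter_le_sugeno_of_sugeno_lt μ A f (hp ▸ hpq)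
    exact le_max_of_le_right (hop _ _ _ _ htH
      ((hμmono _ _ hlevel (hA.inter (hf measurableSet_Ici)) hsub).trans hμq))
  · have hempty : A ∩ {x | t ≤ (H ∘ f) x} = ∅ :=
      eq_empty_of_forall_notMem fun x hx => htH (hx.2.trans (le_iSup H (f x)))
    rw [hempty, hμ0, hop0]
    exact zero_le

theorem stmt8 [MeasurableSpace X] (μ : Set X → ℝ≥0∞) (A : Set X) (hA : MeasurableSet A)
    (hμ0 : μ ∅ = 0)
    (hμmono : ∀ B C : Set X, MeasurableSet B → MeasurableSet C → B ⊆ C → μ B ≤ μ C)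
    (op : ℝ≥0∞ → ℝ≥0∞ → ℝ≥0∞)
    (hop : ∀ a b c d : ℝ≥0∞, a ≤ c → b ≤ d → op a b ≤ op c d)
    (hop0 : ∀ a : ℝ≥0∞, op a 0 = 0)
    (hrc : ∀ y x : ℝ≥0∞, ContinuousWithinAt (fun a => op a y) (Ioi x) x)
    (f : X → ℝ≥0∞) (hf : Measurable f)
    (H : ℝ≥0∞ → ℝ≥0∞) (hHf : Measurable (H ∘ f))
    (p : ℝ≥0∞) (hp : p = sugeno μ A f) (hpfin : p ≠ ⊤) :
    gSugeno op μ A (H ∘ f)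
      ≤ max (op (max (upperRightLim H p) (⨆ y ∈ Icc 0 p, H y)) (μ A))
            (op (⨆ y : ℝ≥0∞, H y) p) :=
  stmt8_general μ A hA hμ0 hμmono op hop hop0 f hf H hHf p hp
end

section
/- Let ∘ be nondecreasing with a∘0 = 0 and x ↦ x∘y right-continuous for fixed y. Let μ be a monotone measure that is weakly superadditive on A (μ(A) ≥ μ(A∩B) + μ(A∩Bᶜ) for all B), f : X → [0,∞] measurable, H : [0,∞] → [0,∞] with H∘f measurable, and p = Su_{μ,A}(f) < ∞. Then I_{∘,μ,A}(H(f)) ≤ max( (max(H(p⁻), sup H([p,∞])) ∘ μ(A)), ((sup H) ∘ (μ(A) − p)) ), where H(p⁻) = lim_{ε→0} sup H((p−ε,p)) with H(0⁻)=0. -/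
open scoped ENNReal
open Set

variable {X : Type*}

/-- Upper left-hand limit of `H` at `p`: `lim_{ε→0} sup H((p-ε,p))`, with value `0` at `p = 0`. -/
noncomputable def upperLeftLim (H : ℝ≥0∞ → ℝ≥0∞) (p : ℝ≥0∞) : ℝ≥0∞ :=
  if p = 0 then 0 else ⨅ q ∈ Iio p, ⨆ y ∈ Ioo q p, H y

/-! For levels `t ≤ max (H(p⁻)) (sup H([p,∞]))`, monotonicity of `∘` and `μ` bounds
`t ∘ μ(A ∩ {H ∘ f ≥ t})` by the first entry of the maximum, and above `sup H` the superlevel set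
is empty. In between, every `y` with `H y ≥ t` lies below some `q < p`; for `s ∈ (q, p)` the
definition of `p` forces `μ(A ∩ {f ≥ s}) ≥ p`, and `A ∩ {f ≥ s}` misses `{H ∘ f ≥ t}`, so weak
superadditivity gives `μ(A ∩ {H ∘ f ≥ t}) ≤ μ A - p`. -/

theorem exists_lt_forall_lt_of_upperLeftLim_lt {H : ℝ≥0∞ → ℝ≥0∞} {p t : ℝ≥0∞} (hp : p ≠ 0)
    (hleft : upperLeftLim H p < t) (hright : ⨆ y ∈ Ici p, H y < t) :
    ∃ q < p, ∀ y, q < y → H y < t := by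
  rw [upperLeftLim, if_neg hp] at hleft
  simp only [iInf_lt_iff, mem_Iio, exists_prop] at hleft
  obtain ⟨q, hqp, hq⟩ := hleft
  refine ⟨q, hqp, fun y hqy => ?_⟩
  rcases lt_or_ge y p with hyp | hpy
  · exact (le_biSup H (show y ∈ Ioo q p from ⟨hqy, hyp⟩)).trans_lt hq
  · exact (le_biSup H (show y ∈ Ici p from hpy)).trans_lt hright

section Sugeno

variable [MeasurableSpace X] {μ : Set X → ℝ≥0∞} {A : Set X} {f : X → ℝ≥0∞}

theorem sugeno_le_max_measure_superlevel (hA : MeasurableSet A) (hf : Measurable f)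
    (hμmono : ∀ B C : Set X, MeasurableSet B → MeasurableSet C → B ⊆ C → μ B ≤ μ C)
    (s : ℝ≥0∞) : sugeno μ A f ≤ max s (μ (A ∩ {x | s ≤ f x})) := by
  refine iSup_le fun t => ?_
  rcases le_total t s with hts | hst
  · exact le_max_of_le_left ((min_le_left _ _).trans hts)
  · exact le_max_of_le_right ((min_le_right _ _).trans
      (hμmono _ _ (hA.inter (hf measurableSet_Ici)) (hA.inter (hf measurableSet_Ici))
        (inter_subset_inter_right _ fun _ hx => hst.trans hx)))

theorem sugeno_le_measure_superlevel_of_lt (hA : MeasurableSet A) (hf : Measurable f)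
    (hμmono : ∀ B C : Set X, MeasurableSet B → MeasurableSet C → B ⊆ C → μ B ≤ μ C)
    {s : ℝ≥0∞} (hs : s < sugeno μ A f) : sugeno μ A f ≤ μ (A ∩ {x | s ≤ f x}) :=
  (le_max_iff.mp (sugeno_le_max_measure_superlevel hA hf hμmono s)).resolve_left hs.not_ge

theorem measure_inter_superlevel_comp_le_sub_sugeno {H : ℝ≥0∞ → ℝ≥0∞} {t : ℝ≥0∞}
    (hA : MeasurableSet A)
    (hμmono : ∀ B C : Set X, MeasurableSet B → MeasurableSet C → B ⊆ C → μ B ≤ μ C)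
    (hμwsup : ∀ B : Set X, MeasurableSet B → μ (A ∩ B) + μ (A ∩ Bᶜ) ≤ μ A)
    (hf : Measurable f) (hHf : Measurable (H ∘ f)) (hfin : sugeno μ A f ≠ ⊤)
    (ht : max (upperLeftLim H (sugeno μ A f)) (⨆ y ∈ Ici (sugeno μ A f), H y) < t) :
    μ (A ∩ {x | t ≤ (H ∘ f) x}) ≤ μ A - sugeno μ A f := by
  set p := sugeno μ A f
  have hB : MeasurableSet {x | t ≤ (H ∘ f) x} := hHf measurableSet_Ici
  rcases eq_or_ne p 0 with hp0 | hp0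
  · rw [hp0, tsub_zero]
    exact hμmono _ _ (hA.inter hB) hA inter_subset_left
  obtain ⟨q, hqp, hq⟩ := exists_lt_forall_lt_of_upperLeftLim_lt hp0
    ((le_max_left _ _).trans_lt ht) ((le_max_right _ _).trans_lt ht)
  obtain ⟨s, hqs, hsp⟩ := exists_between hqp
  have hsub : A ∩ {x | s ≤ f x} ⊆ A ∩ {x | t ≤ (H ∘ f) x}ᶜ :=
    fun x ⟨hxA, hxs⟩ => ⟨hxA, (hq _ (hqs.trans_le hxs)).not_ge⟩
  have hcompl : p ≤ μ (A ∩ {x | t ≤ (H ∘ f) x}ᶜ) :=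
    (sugeno_le_measure_superlevel_of_lt hA hf hμmono hsp).trans
      (hμmono _ _ (hA.inter (hf measurableSet_Ici)) (hA.inter hB.compl) hsub)
  exact ENNReal.le_sub_of_add_le_right hfin ((add_le_add_right hcompl _).trans (hμwsup _ hB))

end Sugeno

theorem stmt9_general [MeasurableSpace X] (μ : Set X → ℝ≥0∞) (A : Set X) (hA : MeasurableSet A)
    (hμ0 : μ ∅ = 0)
    (hμmono : ∀ B C : Set X, MeasurableSet B → MeasurableSet C → B ⊆ C → μ B ≤ μ C)
    (hμwsup : ∀ B : Set X, MeasurableSet B → μ (A ∩ B) + μ (A ∩ Bᶜ) ≤ μ A)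
    (op : ℝ≥0∞ → ℝ≥0∞ → ℝ≥0∞)
    (hop : ∀ a b c d : ℝ≥0∞, a ≤ c → b ≤ d → op a b ≤ op c d)
    (hop0 : ∀ a : ℝ≥0∞, op a 0 = 0)
    (f : X → ℝ≥0∞) (hf : Measurable f)
    (H : ℝ≥0∞ → ℝ≥0∞) (hHf : Measurable (H ∘ f))
    (p : ℝ≥0∞) (hp : p = sugeno μ A f) (hpfin : p ≠ ⊤) :
    gSugeno op μ A (H ∘ f)
      ≤ max (op (max (upperLeftLim H p) (⨆ y ∈ Ici p, H y)) (μ A))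
            (op (⨆ y : ℝ≥0∞, H y) (μ A - p)) := by
  subst hp
  refine iSup_le fun t => ?_
  by_cases htM : t ≤ max (upperLeftLim H (sugeno μ A f)) (⨆ y ∈ Ici (sugeno μ A f), H y)
  · exact le_max_of_le_left (hop _ _ _ _ htM
      (hμmono _ _ (hA.inter (hHf measurableSet_Ici)) hA inter_subset_left))
  by_cases htH : t ≤ ⨆ y, H y
  · exact le_max_of_le_right (hop _ _ _ _ htH (measure_inter_superlevel_comp_le_sub_sugeno
      hA hμmono hμwsup hf hHf hpfin (not_le.mp htM)))
  have hempty : A ∩ {x | t ≤ (H ∘ f) x} = ∅ :=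
    eq_empty_of_forall_notMem fun x hx => htH (hx.2.trans (le_iSup H (f x)))
  rw [hempty, hμ0, hop0]
  exact zero_le

theorem stmt9 [MeasurableSpace X] (μ : Set X → ℝ≥0∞) (A : Set X) (hA : MeasurableSet A)
    (hμ0 : μ ∅ = 0)
    (hμmono : ∀ B C : Set X, MeasurableSet B → MeasurableSet C → B ⊆ C → μ B ≤ μ C)
    (hμwsup : ∀ B : Set X, MeasurableSet B → μ (A ∩ B) + μ (A ∩ Bᶜ) ≤ μ A)
    (op : ℝ≥0∞ → ℝ≥0∞ → ℝ≥0∞)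
    (hop : ∀ a b c d : ℝ≥0∞, a ≤ c → b ≤ d → op a b ≤ op c d)
    (hop0 : ∀ a : ℝ≥0∞, op a 0 = 0)
    (hrc : ∀ y x : ℝ≥0∞, ContinuousWithinAt (fun a => op a y) (Ioi x) x)
    (f : X → ℝ≥0∞) (hf : Measurable f)
    (H : ℝ≥0∞ → ℝ≥0∞) (hHf : Measurable (H ∘ f))
    (p : ℝ≥0∞) (hp : p = sugeno μ A f) (hpfin : p ≠ ⊤) :
    gSugeno op μ A (H ∘ f)
      ≤ max (op (max (upperLeftLim H p) (⨆ y ∈ Ici p, H y)) (μ A))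
            (op (⨆ y : ℝ≥0∞, H y) (μ A - p)) :=
  stmt9_general μ A hA hμ0 hμmono hμwsup op hop hop0 f hf H hHf p hp hpfin
end

section
/- Let H : [0,∞] → [0,∞] be continuous, increasing on [0,c] and decreasing on [c,∞], c ∈ [a,b] ⊆ [0,∞). Let μ be a monotone measure weakly superadditive on A, f : X → [a,b] measurable, and p = Su_{μ,A}(f) with c < p < ∞. Then Su_{μ,A}(H∘f) ≤ min( max(H(p), μ(A) − p), H(c), μ(A) ). -/
/-!
Let `p` be the Sugeno integral of `f`. Every level `q < p` satisfies `q ≤ μ (A ∩ {q ≤ f})`, so by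
weak superadditivity `μ (A ∩ {f < q}) + q ≤ μ A`. If `t > H p`, continuity of `H` at `p` and its
decrease on `[c, ∞]` give levels `q` arbitrarily close to `p` from below with `{t ≤ H ∘ f} ⊆ {f < q}`;
hence `min t (μ (A ∩ {t ≤ H ∘ f})) ≤ μ A - p`. The bounds `H c` and `μ A` hold because `H c` is the
maximum of `H` and `μ` is monotone.
-/

open scoped ENNReal
open Set

variable {X : Type*}

lemma ENNReal.add_le_of_forall_lt_le {x y p : ℝ≥0∞} (hp : p ≠ 0) (h : ∀ q < p, x + q ≤ y) :
    x + p ≤ y := by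
  have hsup : x + ⨆ q, ⨆ _ : q < p, q = ⨆ q, ⨆ _ : q < p, x + q :=
    ENNReal.add_biSup' (p := (· < p)) ⟨0, pos_iff_ne_zero.2 hp⟩ fun q => q
  rw [ENNReal.iSup_lt_eq_self] at hsup
  exact hsup ▸ iSup₂_le h

lemma apply_le_of_monotoneOn_of_antitoneOn {α β : Type*} [LinearOrder α] [Preorder β]
    {H : α → β} {a c s : α} (hinc : MonotoneOn H (Icc a c)) (hdec : AntitoneOn H (Ici c))
    (hs : a ≤ s) : H s ≤ H c := by
  rcases le_total s c with hsc | hcs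
  · exact hinc ⟨hs, hsc⟩ ⟨hs.trans hsc, le_rfl⟩ hsc
  · exact hdec self_mem_Ici hcs hcs

lemma AntitoneOn.exists_mem_Ioo_setOf_le_apply_subset_Iio {α β : Type*} [LinearOrder α]
    [TopologicalSpace α] [OrderTopology α] [DenselyOrdered α] [LinearOrder β] [TopologicalSpace β]
    [OrderTopology β] {H : α → β} {c p q : α} {t : β} (hdec : AntitoneOn H (Ici c))
    (hH : ContinuousAt H p) (hcp : c < p) (ht : H p < t) (hqp : q < p) :
    ∃ s ∈ Ioo q p, {y | t ≤ H y} ⊆ Iio s := by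
  obtain ⟨l, hlp, hl⟩ :=
    exists_Ioc_subset_of_mem_nhds (hH.preimage_mem_nhds (Iio_mem_nhds ht)) ⟨c, hcp⟩
  obtain ⟨s, hs, hsp⟩ := exists_between (max_lt hlp (max_lt hqp hcp))
  simp only [max_lt_iff] at hs
  obtain ⟨hls, hqs, hcs⟩ := hs
  refine ⟨s, ⟨hqs, hsp⟩, fun y hy => ?_⟩
  by_contra hsy
  rw [mem_Iio, not_lt] at hsy
  have hHs : H s < t := hl ⟨hls, hsp.le⟩
  exact (hdec hcs.le (hcs.le.trans hsy) hsy).trans_lt hHs |>.not_ge hy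

section Sugeno

def MonotoneOnMeasurableSets [MeasurableSpace X] (μ : Set X → ℝ≥0∞) : Prop :=
  ∀ B C : Set X, MeasurableSet B → MeasurableSet C → B ⊆ C → μ B ≤ μ C

def WeaklySuperadditiveOn [MeasurableSpace X] (μ : Set X → ℝ≥0∞) (A : Set X) : Prop :=
  ∀ B : Set X, MeasurableSet B → μ (A ∩ B) + μ (A ∩ Bᶜ) ≤ μ A

variable {μ : Set X → ℝ≥0∞} {A : Set X} {f g : X → ℝ≥0∞}

lemma sugeno_le_of_forall_le {M : ℝ≥0∞} (hμ0 : μ ∅ = 0) (hg : ∀ x, g x ≤ M) :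
    sugeno μ A g ≤ M := by
  refine iSup_le fun t => ?_
  rcases le_or_gt t M with htM | hMt
  · exact (min_le_left _ _).trans htM
  · have hempty : A ∩ {x | t ≤ g x} = ∅ :=
      eq_empty_of_forall_notMem fun x hx => (hg x).not_gt (hMt.trans_le hx.2)
    simp [hempty, hμ0]

variable [MeasurableSpace X]

lemma sugeno_le_measure_s11 (hμ : MonotoneOnMeasurableSets μ) (hA : MeasurableSet A)
    (hg : Measurable g) : sugeno μ A g ≤ μ A :=
  iSup_le fun _ => (min_le_right _ _).trans <|
    hμ _ _ (hA.inter (measurableSet_le measurable_const hg)) hA inter_subset_left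

lemma sugeno_le_of_measure_le (hμ : MonotoneOnMeasurableSets μ) (hA : MeasurableSet A)
    (hf : Measurable f) {s : ℝ≥0∞} (hs : μ (A ∩ {x | s ≤ f x}) ≤ s) : sugeno μ A f ≤ s := by
  refine iSup_le fun t => ?_
  rcases le_or_gt t s with hts | hst
  · exact (min_le_left _ _).trans hts
  · refine (min_le_right _ _).trans (le_trans ?_ hs)
    exact hμ _ _ (hA.inter (measurableSet_le measurable_const hf))
      (hA.inter (measurableSet_le measurable_const hf))
      (inter_subset_inter_right _ fun x hx => hst.le.trans hx)

lemma le_measure_of_lt_sugeno (hμ : MonotoneOnMeasurableSets μ) (hA : MeasurableSet A)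
    (hf : Measurable f) {s : ℝ≥0∞} (hs : s < sugeno μ A f) : s ≤ μ (A ∩ {x | s ≤ f x}) := by
  contrapose! hs
  exact sugeno_le_of_measure_le hμ hA hf hs.le

lemma measure_inter_lt_add_le_of_lt_sugeno (hμ : MonotoneOnMeasurableSets μ)
    (hwsup : WeaklySuperadditiveOn μ A) (hA : MeasurableSet A) (hf : Measurable f) {s : ℝ≥0∞}
    (hs : s < sugeno μ A f) :
    μ (A ∩ {x | f x < s}) + s ≤ μ A := by
  have hcompl : {x | f x < s} = {x | s ≤ f x}ᶜ := by
    ext x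
    simp
  calc μ (A ∩ {x | f x < s}) + s
      ≤ μ (A ∩ {x | s ≤ f x}ᶜ) + μ (A ∩ {x | s ≤ f x}) := by
        rw [hcompl]
        gcongr
        exact le_measure_of_lt_sugeno hμ hA hf hs
    _ ≤ μ A := by
      rw [add_comm]
      exact hwsup _ (measurableSet_le measurable_const hf)

lemma sugeno_comp_le_max_sub (hμ : MonotoneOnMeasurableSets μ)
    (hwsup : WeaklySuperadditiveOn μ A) (hA : MeasurableSet A) (hf : Measurable f)
    {H : ℝ≥0∞ → ℝ≥0∞} (hH : Continuous H)
    {c : ℝ≥0∞} (hdec : AntitoneOn H (Ici c)) (hcp : c < sugeno μ A f)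
    (hpfin : sugeno μ A f ≠ ⊤) :
    sugeno μ A (H ∘ f) ≤ max (H (sugeno μ A f)) (μ A - sugeno μ A f) := by
  set p := sugeno μ A f
  refine iSup_le fun t => ?_
  rcases le_or_gt t (H p) with htH | hHt
  · exact le_max_of_le_left ((min_le_left _ _).trans htH)
  refine le_max_of_le_right ((min_le_right _ _).trans (ENNReal.le_sub_of_add_le_right hpfin ?_))
  refine ENNReal.add_le_of_forall_lt_le (ne_bot_of_gt hcp) fun q hqp => ?_
  obtain ⟨s, ⟨hqs, hsp⟩, hlevel⟩ :=
    hdec.exists_mem_Ioo_setOf_le_apply_subset_Iio hH.continuousAt hcp hHt hqp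
  have hHf : Measurable (H ∘ f) := hH.measurable.comp hf
  calc μ (A ∩ {x | t ≤ (H ∘ f) x}) + q ≤ μ (A ∩ {x | f x < s}) + s := by
        gcongr
        exact hμ _ _ (hA.inter (measurableSet_le measurable_const hHf))
          (hA.inter (measurableSet_lt hf measurable_const))
          (inter_subset_inter_right _ fun x hx => hlevel hx)
    _ ≤ μ A := measure_inter_lt_add_le_of_lt_sugeno hμ hwsup hA hf hsp

end Sugeno

theorem stmt11_general [MeasurableSpace X] (μ : Set X → ℝ≥0∞) (A : Set X) (hA : MeasurableSet A)
    (hμ0 : μ ∅ = 0)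
    (hμmono : ∀ B C : Set X, MeasurableSet B → MeasurableSet C → B ⊆ C → μ B ≤ μ C)
    (hμwsup : ∀ B : Set X, MeasurableSet B → μ (A ∩ B) + μ (A ∩ Bᶜ) ≤ μ A)
    (H : ℝ≥0∞ → ℝ≥0∞) (hHcont : Continuous H)
    (c : ℝ≥0∞)
    (hHinc : StrictMonoOn H (Icc 0 c)) (hHdec : StrictAntiOn H (Ici c))
    (f : X → ℝ≥0∞) (hf : Measurable f)
    (p : ℝ≥0∞) (hp : p = sugeno μ A f) (hcp : c < p) (hpfin : p ≠ ⊤) :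
    sugeno μ A (H ∘ f) ≤ min (min (max (H p) (μ A - p)) (H c)) (μ A) := by
  subst hp
  have hHmax : ∀ s, H s ≤ H c := fun s =>
    apply_le_of_monotoneOn_of_antitoneOn hHinc.monotoneOn hHdec.antitoneOn zero_le
  refine le_min (le_min ?_ ?_) ?_
  · exact sugeno_comp_le_max_sub hμmono hμwsup hA hf hHcont hHdec.antitoneOn hcp hpfin
  · exact sugeno_le_of_forall_le hμ0 fun x => hHmax (f x)
  · exact sugeno_le_measure_s11 hμmono hA (hHcont.measurable.comp hf)

theorem stmt11 [MeasurableSpace X] (μ : Set X → ℝ≥0∞) (A : Set X) (hA : MeasurableSet A)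
    (hμ0 : μ ∅ = 0)
    (hμmono : ∀ B C : Set X, MeasurableSet B → MeasurableSet C → B ⊆ C → μ B ≤ μ C)
    (hμwsup : ∀ B : Set X, MeasurableSet B → μ (A ∩ B) + μ (A ∩ Bᶜ) ≤ μ A)
    (H : ℝ≥0∞ → ℝ≥0∞) (hHcont : Continuous H)
    (a b c : ℝ≥0∞) (hb : b ≠ ⊤) (hc : c ∈ Icc a b)
    (hHinc : StrictMonoOn H (Icc 0 c)) (hHdec : StrictAntiOn H (Ici c))
    (f : X → ℝ≥0∞) (hf : Measurable f) (hfab : ∀ x, f x ∈ Icc a b)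
    (p : ℝ≥0∞) (hp : p = sugeno μ A f) (hcp : c < p) (hpfin : p ≠ ⊤) :
    sugeno μ A (H ∘ f) ≤ min (min (max (H p) (μ A - p)) (H c)) (μ A) :=
  stmt11_general μ A hA hμ0 hμmono hμwsup H hHcont c hHinc hHdec f hf p hp hcp hpfin
end

section
/- Let μ be a continuous monotone measure that is weakly subadditive on A, ∘ nondecreasing with a∘0 = 0, f : X → [0,∞] measurable, H : [0,∞] → [0,∞] with H∘f measurable, and p = Su_{μ,A}(f) < ∞. Then I_{∘,μ,A}(H(f)) ≥ max( (inf H([0,p])) ∘ (μ(A) − p), (inf H) ∘ μ(A) ). -/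
open scoped ENNReal
open Set

variable {X : Type*}

/-!
Let `p` be the Sugeno integral of `f` over `A`. For every level `t > p` the term `min t μ(A ∩ {t ≤ f})`
is at most `p`, so `μ(A ∩ {t ≤ f}) ≤ p`; continuity from below gives `μ(A ∩ {p < f}) ≤ p`. Weak
subadditivity along `{p < f}` then shows `μ(A ∩ {f ≤ p}) ≥ μ(A) - p`, and on this set `H ∘ f` is at least
`inf H([0,p])`: taking this value as the level in the generalized Sugeno integral of `H ∘ f` gives the
first bound. The second comes from the level `inf H`, at which the level set is all of `A`.
-/

theorem ENNReal.setOf_lt_eq_iUnion_setOf_add_inv_le {f : X → ℝ≥0∞} {p : ℝ≥0∞} (hp : p ≠ ⊤) :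
    {x | p < f x} = ⋃ n : ℕ, {x | p + (n : ℝ≥0∞)⁻¹ ≤ f x} := by
  ext x
  simp only [mem_ofPred_eq, mem_iUnion]
  constructor
  · intro hx
    obtain ⟨n, hn⟩ := ENNReal.exists_inv_nat_lt (tsub_pos_of_lt hx).ne'
    exact ⟨n, (add_le_add_right hn.le p).trans (add_tsub_cancel_of_le hx.le).le⟩
  · rintro ⟨n, hn⟩
    exact (ENNReal.lt_add_right hp (by simp)).trans_le hn

theorem monotone_setOf_add_inv_le (f : X → ℝ≥0∞) (p : ℝ≥0∞) :
    Monotone fun n : ℕ => {x | p + (n : ℝ≥0∞)⁻¹ ≤ f x} := fun _ _ hmn _ hx =>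
  (add_le_add_right (ENNReal.inv_le_inv.mpr (by exact_mod_cast hmn)) p).trans hx

theorem measure_inter_setOf_le_le_sugeno {μ : Set X → ℝ≥0∞} {A : Set X} {f : X → ℝ≥0∞}
    {t : ℝ≥0∞} (ht : sugeno μ A f < t) :
    μ (A ∩ {x | t ≤ f x}) ≤ sugeno μ A f := by
  have hmin : min t (μ (A ∩ {x | t ≤ f x})) ≤ sugeno μ A f :=
    le_iSup (fun t => min t (μ (A ∩ {x | t ≤ f x}))) t
  exact (min_le_iff.mp hmin).resolve_left ht.not_ge

section Sugeno

variable [MeasurableSpace X] {μ : Set X → ℝ≥0∞} {A : Set X} {f : X → ℝ≥0∞}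

theorem measure_inter_setOf_sugeno_lt_le (hA : MeasurableSet A) (hf : Measurable f)
    (hμbelow : ∀ s : ℕ → Set X, (∀ n, MeasurableSet (s n)) → Monotone s →
      μ (⋃ n, s n) = ⨆ n, μ (s n)) :
    μ (A ∩ {x | sugeno μ A f < f x}) ≤ sugeno μ A f := by
  set p := sugeno μ A f
  rcases eq_or_ne p ⊤ with hp | hp
  · exact hp ▸ le_top
  rw [ENNReal.setOf_lt_eq_iUnion_setOf_add_inv_le hp, inter_iUnion,
    hμbelow _ (fun n => hA.inter (measurableSet_le measurable_const hf))
      fun _ _ hmn => inter_subset_inter_right A (monotone_setOf_add_inv_le f p hmn)]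
  exact iSup_le fun n =>
    measure_inter_setOf_le_le_sugeno (ENNReal.lt_add_right hp (by simp))

theorem measure_sub_sugeno_le_measure_inter_setOf_le (hA : MeasurableSet A) (hf : Measurable f)
    (hμbelow : ∀ s : ℕ → Set X, (∀ n, MeasurableSet (s n)) → Monotone s →
      μ (⋃ n, s n) = ⨆ n, μ (s n))
    (hμwsub : ∀ B : Set X, MeasurableSet B → μ A ≤ μ (A ∩ B) + μ (A ∩ Bᶜ)) :
    μ A - sugeno μ A f ≤ μ (A ∩ {x | f x ≤ sugeno μ A f}) := by
  set p := sugeno μ A f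
  have hcompl : {x | p < f x}ᶜ = {x | f x ≤ p} := by ext; simp
  rw [tsub_le_iff_left]
  calc μ A ≤ μ (A ∩ {x | p < f x}) + μ (A ∩ {x | p < f x}ᶜ) :=
        hμwsub _ (measurableSet_lt measurable_const hf)
    _ ≤ p + μ (A ∩ {x | f x ≤ p}) := by
        rw [hcompl]
        exact add_le_add_left (measure_inter_setOf_sugeno_lt_le hA hf hμbelow) _

end Sugeno

theorem op_measure_le_gSugeno [MeasurableSpace X] {μ : Set X → ℝ≥0∞} {A B : Set X}
    {op : ℝ≥0∞ → ℝ≥0∞ → ℝ≥0∞} {g : X → ℝ≥0∞} {t : ℝ≥0∞} (hop : Monotone (op t))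
    (hμmono : ∀ B C : Set X, MeasurableSet B → MeasurableSet C → B ⊆ C → μ B ≤ μ C)
    (hA : MeasurableSet A) (hB : MeasurableSet B) (hg : Measurable g)
    (hBA : B ⊆ A ∩ {x | t ≤ g x}) :
    op t (μ B) ≤ gSugeno op μ A g :=
  (hop (hμmono _ _ hB (hA.inter (measurableSet_le measurable_const hg)) hBA)).trans
    (le_iSup (fun t => op t (μ (A ∩ {x | t ≤ g x}))) t)

theorem stmt13_general [MeasurableSpace X] (μ : Set X → ℝ≥0∞) (A : Set X) (hA : MeasurableSet A)
    (hμmono : ∀ B C : Set X, MeasurableSet B → MeasurableSet C → B ⊆ C → μ B ≤ μ C)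
    (hμbelow : ∀ s : ℕ → Set X, (∀ n, MeasurableSet (s n)) → Monotone s →
      μ (⋃ n, s n) = ⨆ n, μ (s n))
    (hμwsub : ∀ B : Set X, MeasurableSet B → μ A ≤ μ (A ∩ B) + μ (A ∩ Bᶜ))
    (op : ℝ≥0∞ → ℝ≥0∞ → ℝ≥0∞)
    (hop : ∀ a b c d : ℝ≥0∞, a ≤ c → b ≤ d → op a b ≤ op c d)
    (f : X → ℝ≥0∞) (hf : Measurable f)
    (H : ℝ≥0∞ → ℝ≥0∞) (hHf : Measurable (H ∘ f))
    (p : ℝ≥0∞) (hp : p = sugeno μ A f) :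
    max (op (⨅ y ∈ Icc 0 p, H y) (μ A - p)) (op (⨅ y : ℝ≥0∞, H y) (μ A))
      ≤ gSugeno op μ A (H ∘ f) := by
  have hopt : ∀ t, Monotone (op t) := fun t _ _ => hop _ _ _ _ le_rfl
  refine max_le ?_ (op_measure_le_gSugeno (hopt _) hμmono hA hA hHf fun x hx =>
    ⟨hx, iInf_le H (f x)⟩)
  subst hp
  calc op (⨅ y ∈ Icc 0 (sugeno μ A f), H y) (μ A - sugeno μ A f)
      ≤ op (⨅ y ∈ Icc 0 (sugeno μ A f), H y) (μ (A ∩ {x | f x ≤ sugeno μ A f})) :=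
        hopt _ (measure_sub_sugeno_le_measure_inter_setOf_le hA hf hμbelow hμwsub)
    _ ≤ gSugeno op μ A (H ∘ f) :=
        op_measure_le_gSugeno (hopt _) hμmono hA (hA.inter (measurableSet_le hf measurable_const))
          hHf fun x hx => ⟨hx.1, show _ ≤ H (f x) from iInf₂_le (f x) ⟨zero_le, hx.2⟩⟩

theorem stmt13 [MeasurableSpace X] (μ : Set X → ℝ≥0∞) (A : Set X) (hA : MeasurableSet A)
    (hμ0 : μ ∅ = 0)
    (hμmono : ∀ B C : Set X, MeasurableSet B → MeasurableSet C → B ⊆ C → μ B ≤ μ C)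
    (hμbelow : ∀ s : ℕ → Set X, (∀ n, MeasurableSet (s n)) → Monotone s →
      μ (⋃ n, s n) = ⨆ n, μ (s n))
    (hμabove : ∀ s : ℕ → Set X, (∀ n, MeasurableSet (s n)) → Antitone s →
      μ (⋂ n, s n) = ⨅ n, μ (s n))
    (hμwsub : ∀ B : Set X, MeasurableSet B → μ A ≤ μ (A ∩ B) + μ (A ∩ Bᶜ))
    (op : ℝ≥0∞ → ℝ≥0∞ → ℝ≥0∞)
    (hop : ∀ a b c d : ℝ≥0∞, a ≤ c → b ≤ d → op a b ≤ op c d)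
    (hop0 : ∀ a : ℝ≥0∞, op a 0 = 0)
    (f : X → ℝ≥0∞) (hf : Measurable f)
    (H : ℝ≥0∞ → ℝ≥0∞) (hHf : Measurable (H ∘ f))
    (p : ℝ≥0∞) (hp : p = sugeno μ A f) (hpfin : p ≠ ⊤) :
    max (op (⨅ y ∈ Icc 0 p, H y) (μ A - p)) (op (⨅ y : ℝ≥0∞, H y) (μ A))
      ≤ gSugeno op μ A (H ∘ f) :=
  stmt13_general μ A hA hμmono hμbelow hμwsub op hop f hf H hHf p hp
end

section
/- Let μ be a continuous monotone measure that is weakly superadditive on A, ∘ nondecreasing with a∘0 = 0, f : X → [0,∞] measurable, H : [0,∞] → [0,∞] with H∘f measurable, and p = Su_{μ,A}(f) < ∞. Then I_{∘,μ,A}(H(f)) ≤ max( (sup H([p,∞])) ∘ μ(A), (sup H) ∘ (μ(A) − p) ). -/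
open scoped ENNReal
open Set

variable {X : Type*}

/-! The Sugeno integral `p` of `f` on `A` satisfies `μ (A ∩ {p ≤ f}) ≥ p` (this uses continuity
from above at the level `p`), so weak superadditivity leaves at most `μ A - p` for `A ∩ {f < p}`.
A level set `A ∩ {t ≤ H ∘ f}` either meets `{p ≤ f}`, and then `t ≤ sup H([p, ∞])`, or lies
inside `A ∩ {f < p}` and has measure at most `μ A - p`. -/

section LevelSets

variable [MeasurableSpace X] {μ : Set X → ℝ≥0∞} {A : Set X} {f : X → ℝ≥0∞}

theorem sugeno_le_max_measure_inter_setOf_le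
    (hμmono : ∀ B C : Set X, MeasurableSet B → MeasurableSet C → B ⊆ C → μ B ≤ μ C)
    (hA : MeasurableSet A) (hf : Measurable f) (s : ℝ≥0∞) :
    sugeno μ A f ≤ max s (μ (A ∩ {x | s ≤ f x})) :=
  iSup_le fun t => by
    rcases le_total t s with hts | hst
    · exact le_max_of_le_left ((min_le_left _ _).trans hts)
    · refine le_max_of_le_right ((min_le_right _ _).trans ?_)
      exact hμmono _ _ (hA.inter (hf measurableSet_Ici)) (hA.inter (hf measurableSet_Ici))
        (inter_subset_inter_right _ fun x hx => hst.trans hx)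

theorem sugeno_le_measure_inter_setOf_le_of_lt
    (hμmono : ∀ B C : Set X, MeasurableSet B → MeasurableSet C → B ⊆ C → μ B ≤ μ C)
    (hA : MeasurableSet A) (hf : Measurable f) {s : ℝ≥0∞} (hs : s < sugeno μ A f) :
    sugeno μ A f ≤ μ (A ∩ {x | s ≤ f x}) :=
  (le_max_iff.mp (sugeno_le_max_measure_inter_setOf_le hμmono hA hf s)).resolve_left hs.not_ge

theorem le_measure_inter_setOf_le_of_forall_lt
    (hμabove : ∀ s : ℕ → Set X, (∀ n, MeasurableSet (s n)) → Antitone s →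
      μ (⋂ n, s n) = ⨅ n, μ (s n))
    (hA : MeasurableSet A) (hf : Measurable f) {c p : ℝ≥0∞} (hp : 0 < p)
    (h : ∀ s < p, c ≤ μ (A ∩ {x | s ≤ f x})) :
    c ≤ μ (A ∩ {x | p ≤ f x}) := by
  obtain ⟨u, hu_mono, hu_mem, hu_lim⟩ := exists_seq_strictMono_tendsto' hp
  have hinter : ⋂ n, A ∩ {x | u n ≤ f x} = A ∩ {x | p ≤ f x} := by
    ext x
    simp only [mem_iInter, mem_inter_iff, mem_ofPred_eq]
    exact ⟨fun hx => ⟨(hx 0).1, le_of_tendsto' hu_lim fun n => (hx n).2⟩,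
      fun hx n => ⟨hx.1, (hu_mem n).2.le.trans hx.2⟩⟩
  have hanti : Antitone fun n => A ∩ {x | u n ≤ f x} := fun m n hmn =>
    inter_subset_inter_right _ fun x hx => (hu_mono.monotone hmn).trans hx
  rw [← hinter, hμabove (fun n => A ∩ {x | u n ≤ f x}) (fun n => hA.inter (hf measurableSet_Ici))
    hanti]
  exact le_iInf fun n => h _ (hu_mem n).2

theorem sugeno_le_measure_inter_setOf_sugeno_le
    (hμmono : ∀ B C : Set X, MeasurableSet B → MeasurableSet C → B ⊆ C → μ B ≤ μ C)
    (hμabove : ∀ s : ℕ → Set X, (∀ n, MeasurableSet (s n)) → Antitone s →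
      μ (⋂ n, s n) = ⨅ n, μ (s n))
    (hA : MeasurableSet A) (hf : Measurable f) :
    sugeno μ A f ≤ μ (A ∩ {x | sugeno μ A f ≤ f x}) := by
  rcases eq_or_ne (sugeno μ A f) 0 with h0 | h0
  · simp [h0]
  exact le_measure_inter_setOf_le_of_forall_lt hμabove hA hf (pos_iff_ne_zero.mpr h0)
    fun _ hs => sugeno_le_measure_inter_setOf_le_of_lt hμmono hA hf hs

end LevelSets

theorem measure_inter_compl_le_sub {μ : Set X → ℝ≥0∞} {A B : Set X}
    (hwsup : μ (A ∩ B) + μ (A ∩ Bᶜ) ≤ μ A) {c : ℝ≥0∞} (hc : c ≠ ⊤) (hcB : c ≤ μ (A ∩ B)) :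
    μ (A ∩ Bᶜ) ≤ μ A - c :=
  ENNReal.le_sub_of_add_le_left hc ((add_le_add_left hcB _).trans hwsup)

theorem stmt14_general [MeasurableSpace X] (μ : Set X → ℝ≥0∞) (A : Set X) (hA : MeasurableSet A)
    (hμ0 : μ ∅ = 0)
    (hμmono : ∀ B C : Set X, MeasurableSet B → MeasurableSet C → B ⊆ C → μ B ≤ μ C)
    (hμabove : ∀ s : ℕ → Set X, (∀ n, MeasurableSet (s n)) → Antitone s →
      μ (⋂ n, s n) = ⨅ n, μ (s n))
    (hμwsup : ∀ B : Set X, MeasurableSet B → μ (A ∩ B) + μ (A ∩ Bᶜ) ≤ μ A)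
    (op : ℝ≥0∞ → ℝ≥0∞ → ℝ≥0∞)
    (hop : ∀ a b c d : ℝ≥0∞, a ≤ c → b ≤ d → op a b ≤ op c d)
    (hop0 : ∀ a : ℝ≥0∞, op a 0 = 0)
    (f : X → ℝ≥0∞) (hf : Measurable f)
    (H : ℝ≥0∞ → ℝ≥0∞) (hHf : Measurable (H ∘ f))
    (p : ℝ≥0∞) (hp : p = sugeno μ A f) (hpfin : p ≠ ⊤) :
    gSugeno op μ A (H ∘ f)
      ≤ max (op (⨆ y ∈ Ici p, H y) (μ A)) (op (⨆ y : ℝ≥0∞, H y) (μ A - p)) := by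
  have hlevel : p ≤ μ (A ∩ {x | p ≤ f x}) :=
    hp ▸ sugeno_le_measure_inter_setOf_sugeno_le hμmono hμabove hA hf
  have hbelow : μ (A ∩ {x | p ≤ f x}ᶜ) ≤ μ A - p :=
    measure_inter_compl_le_sub (hμwsup _ (hf measurableSet_Ici)) hpfin hlevel
  refine iSup_le fun t => ?_
  set B := A ∩ {x | t ≤ (H ∘ f) x}
  have hB : MeasurableSet B := hA.inter (hHf measurableSet_Ici)
  by_cases hhigh : ∃ x ∈ B, p ≤ f x
  · obtain ⟨x, hx, hpx⟩ := hhigh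
    exact le_max_of_le_left
      (hop _ _ _ _ (hx.2.trans (le_biSup H hpx)) (hμmono _ _ hB hA inter_subset_left))
  obtain hempty | ⟨x, hx⟩ := B.eq_empty_or_nonempty
  · rw [hempty, hμ0, hop0]
    exact zero_le
  push Not at hhigh
  have hBlow : B ⊆ A ∩ {x | p ≤ f x}ᶜ := fun y hy => ⟨hy.1, (hhigh y hy).not_ge⟩
  exact le_max_of_le_right (hop _ _ _ _ (hx.2.trans (le_iSup H _))
    ((hμmono _ _ hB (hA.inter (hf measurableSet_Ici).compl) hBlow).trans hbelow))

theorem stmt14 [MeasurableSpace X] (μ : Set X → ℝ≥0∞) (A : Set X) (hA : MeasurableSet A)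
    (hμ0 : μ ∅ = 0)
    (hμmono : ∀ B C : Set X, MeasurableSet B → MeasurableSet C → B ⊆ C → μ B ≤ μ C)
    (hμbelow : ∀ s : ℕ → Set X, (∀ n, MeasurableSet (s n)) → Monotone s →
      μ (⋃ n, s n) = ⨆ n, μ (s n))
    (hμabove : ∀ s : ℕ → Set X, (∀ n, MeasurableSet (s n)) → Antitone s →
      μ (⋂ n, s n) = ⨅ n, μ (s n))
    (hμwsup : ∀ B : Set X, MeasurableSet B → μ (A ∩ B) + μ (A ∩ Bᶜ) ≤ μ A)
    (op : ℝ≥0∞ → ℝ≥0∞ → ℝ≥0∞)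
    (hop : ∀ a b c d : ℝ≥0∞, a ≤ c → b ≤ d → op a b ≤ op c d)
    (hop0 : ∀ a : ℝ≥0∞, op a 0 = 0)
    (f : X → ℝ≥0∞) (hf : Measurable f)
    (H : ℝ≥0∞ → ℝ≥0∞) (hHf : Measurable (H ∘ f))
    (p : ℝ≥0∞) (hp : p = sugeno μ A f) (hpfin : p ≠ ⊤) :
    gSugeno op μ A (H ∘ f)
      ≤ max (op (⨆ y ∈ Ici p, H y) (μ A)) (op (⨆ y : ℝ≥0∞, H y) (μ A - p)) :=
  stmt14_general μ A hA hμ0 hμmono hμabove hμwsup op hop hop0 f hf H hHf p hp hpfin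
end

section
/- Let μ be a monotone measure, H : [0,∞) → [0,∞) a concave function, f : X → [0,∞) measurable, p = Su_{μ,A}(f) < ∞, and m_p an element of the superdifferential of H at p (so H(y) ≤ H(p) + m_p(y−p) for all y ≥ 0). Then Su_{μ,A}(H∘f) ≤ min(H(p), μ(A)) + Su_{μ,A}((m_p(f − p))⁺). -/
/-!
The supergradient inequality gives, pointwise, `H ∘ f ≤ H(p) + (m (f - p))⁺`. The Sugeno
integral satisfies `Su(h) ≤ min(c, μ A) + Su(g)` whenever `h ≤ c + g`: at every level `t` the
superlevel set `{t ≤ h}` lies in `{t - c ≤ g}` (truncated subtraction), and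
`min t M ≤ min c (μ A) + min (t - c) M` for every `M ≤ μ A`.
-/

open scoped ENNReal
open Set

variable {X : Type*}

theorem min_add_le_min_add_min {α : Type*} [AddCommMonoid α] [LinearOrder α]
    [CanonicallyOrderedAdd α] {a b M N : α} (hMN : M ≤ N) :
    min (a + b) M ≤ min a N + min b M := by
  rcases le_total b M with hbM | hMb
  · rw [min_eq_left hbM]
    rcases le_total a N with haN | hNa
    · rw [min_eq_left haN]
      exact min_le_left _ _
    · rw [min_eq_right hNa]
      exact le_add_right ((min_le_right _ _).trans hMN)
  · rw [min_eq_right hMb]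
    exact le_add_left (min_le_right _ _)

theorem ConcaveOn.measurable_comp {s : Set ℝ} {H : ℝ → ℝ} (hH : ConcaveOn ℝ s H)
    [MeasurableSpace X] {f : X → ℝ} (hf : Measurable f) (hfs : ∀ x, f x ∈ s) :
    Measurable fun x => H (f x) := by
  refine measurable_of_Ici fun r => ?_
  have hpre : (fun x => H (f x)) ⁻¹' Ici r = f ⁻¹' {y ∈ s | r ≤ H y} := by
    ext x
    simp [hfs x]
  rw [hpre]
  exact hf (hH.convex_ge r).ordConnected.measurableSet

theorem sugeno_le_min_add_sugeno [MeasurableSpace X] {μ : Set X → ℝ≥0∞} {A : Set X}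
    (hA : MeasurableSet A)
    (hμmono : ∀ B C : Set X, MeasurableSet B → MeasurableSet C → B ⊆ C → μ B ≤ μ C)
    {h g : X → ℝ≥0∞} (hh : Measurable h) (hg : Measurable g) {c : ℝ≥0∞}
    (hhg : ∀ x, h x ≤ c + g x) :
    sugeno μ A h ≤ min c (μ A) + sugeno μ A g := by
  refine iSup_le fun t => ?_
  have hlevel : A ∩ {x | t ≤ h x} ⊆ A ∩ {x | t - c ≤ g x} := fun x ⟨hxA, hx⟩ =>
    ⟨hxA, (tsub_le_tsub_right hx c).trans (tsub_le_iff_left.mpr (hhg x))⟩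
  have hmeas_h : MeasurableSet (A ∩ {x | t ≤ h x}) :=
    hA.inter (measurableSet_le measurable_const hh)
  have hmeas_g : MeasurableSet (A ∩ {x | t - c ≤ g x}) :=
    hA.inter (measurableSet_le measurable_const hg)
  calc min t (μ (A ∩ {x | t ≤ h x}))
      ≤ min (c + (t - c)) (μ (A ∩ {x | t - c ≤ g x})) :=
        min_le_min le_add_tsub (hμmono _ _ hmeas_h hmeas_g hlevel)
    _ ≤ min c (μ A) + min (t - c) (μ (A ∩ {x | t - c ≤ g x})) :=
        min_add_le_min_add_min (hμmono _ _ hmeas_g hA inter_subset_left)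
    _ ≤ min c (μ A) + sugeno μ A g := by
        gcongr
        exact le_iSup (fun u => min u (μ (A ∩ {x | u ≤ g x}))) (t - c)

theorem stmt16_general [MeasurableSpace X] (μ : Set X → ℝ≥0∞) (A : Set X) (hA : MeasurableSet A)
    (hμmono : ∀ B C : Set X, MeasurableSet B → MeasurableSet C → B ⊆ C → μ B ≤ μ C)
    (f : X → ℝ) (hf : Measurable f) (hfpos : ∀ x, 0 ≤ f x)
    (H : ℝ → ℝ)
    (hHconc : ConcaveOn ℝ (Ici (0 : ℝ)) H)
    (p : ℝ≥0∞)
    (m : ℝ) (hm : ∀ y ∈ Ici (0 : ℝ), H y ≤ H p.toReal + m * (y - p.toReal)) :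
    sugeno μ A (fun x => ENNReal.ofReal (H (f x)))
      ≤ min (ENNReal.ofReal (H p.toReal)) (μ A)
        + sugeno μ A (fun x => ENNReal.ofReal (m * (f x - p.toReal))) := by
  refine sugeno_le_min_add_sugeno hA hμmono
    (ENNReal.measurable_ofReal.comp (hHconc.measurable_comp hf hfpos))
    (ENNReal.measurable_ofReal.comp (measurable_const.mul (hf.sub measurable_const))) fun x => ?_
  calc ENNReal.ofReal (H (f x))
      ≤ ENNReal.ofReal (H p.toReal + m * (f x - p.toReal)) :=
        ENNReal.ofReal_le_ofReal (hm _ (hfpos x))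
    _ ≤ _ := ENNReal.ofReal_add_le

theorem stmt16 [MeasurableSpace X] (μ : Set X → ℝ≥0∞) (A : Set X) (hA : MeasurableSet A)
    (hμ0 : μ ∅ = 0)
    (hμmono : ∀ B C : Set X, MeasurableSet B → MeasurableSet C → B ⊆ C → μ B ≤ μ C)
    (f : X → ℝ) (hf : Measurable f) (hfpos : ∀ x, 0 ≤ f x)
    (H : ℝ → ℝ) (hHpos : ∀ y ∈ Ici (0 : ℝ), 0 ≤ H y)
    (hHconc : ConcaveOn ℝ (Ici (0 : ℝ)) H)
    (p : ℝ≥0∞) (hp : p = sugeno μ A (fun x => ENNReal.ofReal (f x))) (hpfin : p ≠ ⊤)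
    (m : ℝ) (hm : ∀ y ∈ Ici (0 : ℝ), H y ≤ H p.toReal + m * (y - p.toReal)) :
    sugeno μ A (fun x => ENNReal.ofReal (H (f x)))
      ≤ min (ENNReal.ofReal (H p.toReal)) (μ A)
        + sugeno μ A (fun x => ENNReal.ofReal (m * (f x - p.toReal))) :=
  stmt16_general μ A hA hμmono f hf hfpos H hHconc p m hm
end
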